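/- For the diameter gadget (G,w) with α = n² and β = 2n², where n = |V|, and for any real ε ∈ (0, 1/2] with n ≥ 2/ε: every real number D̃ satisfying D_{G,w} ≤ D̃ ≤ (3/2 − ε)·D_{G,w} satisfies D̃ < 3n² if F(x,y)=1, and D̃ ≥ 3n² if F(x,y)=0. In particular such a D̃ determines the value of F(x,y). -/

import Mathlib

open scoped ENNReal

set_option linter.unusedVariables false

/-- The length of a walk with respect to `ℝ≥0∞` edge weights. -/
noncomputable def wlen {V : Type*} (G : SimpleGraph V) (w : V → V → ℝ≥0∞) {u v : V}
    (p : G.Walk u v) : ℝ≥0∞ :=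
  (p.darts.map fun d => w d.toProd.1 d.toProd.2).sum

/-- The weighted distance: the infimum of walk lengths. -/
noncomputable def wdist {V : Type*} (G : SimpleGraph V) (w : V → V → ℝ≥0∞) (u v : V) : ℝ≥0∞ :=
  ⨅ p : G.Walk u v, wlen G w p

/-- Weighted diameter `D_{G,w} = max_{u,v} d_{G,w}(u,v)`. -/
noncomputable def wdiam {V : Type*} (G : SimpleGraph V) (w : V → V → ℝ≥0∞) : ℝ≥0∞ :=
  ⨆ u, ⨆ v, wdist G w u v

/-- Vertices of the diameter gadget. -/
inductive GV (h s ℓ : ℕ) where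
  /-- tree node `t_{i,j}` encoded in heap order: `t m` is the tree node numbered `m+1`,
  i.e. the node of depth `i` and position `j` with `m + 1 = 2^i + (j-1)`. -/
  | t (m : Fin (2 ^ (h + 1) - 1))
  /-- path node `p_{i+1, j+1}` -/
  | p (i : Fin (2 * s + ℓ)) (j : Fin (2 ^ h))
  /-- node `a_{i+1}` -/
  | a (i : Fin (2 ^ s))
  /-- node `b_{i+1}` -/
  | b (i : Fin (2 ^ s))
  /-- node `a^z_{j+1}` -/
  | ah (z : Bool) (j : Fin s)
  /-- node `b^z_{j+1}` -/
  | bh (z : Bool) (j : Fin s)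
  /-- node `a*_{j+1}` -/
  | as (j : Fin ℓ)
  /-- node `b*_{j+1}` -/
  | bs (j : Fin ℓ)
  deriving DecidableEq, Fintype

/-- Base (oriented) adjacency of the diameter gadget.  Here `bin(i,j)` is realized as
`Nat.testBit` on the 0-based index. -/
def gadgetAdj0 {h s ℓ : ℕ} : GV h s ℓ → GV h s ℓ → Prop
  | .t m, .t m' => 1 ≤ m.val ∧ m'.val + 1 = (m.val + 1) / 2
  | .t m, .p _ j => m.val + 1 = 2 ^ h + j.val
  | .p i j, .p i' j' => i = i' ∧ j.val = j'.val + 1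
  | .ah z jj, .p i j => i.val = 2 * jj.val + (if z then 1 else 0) ∧ j.val = 0
  | .bh z jj, .p i j => i.val = 2 * jj.val + (if z then 0 else 1) ∧ j.val = 2 ^ h - 1
  | .as jj, .p i j => i.val = 2 * s + jj.val ∧ j.val = 0
  | .bs jj, .p i j => i.val = 2 * s + jj.val ∧ j.val = 2 ^ h - 1
  | .a i, .ah z j => z = i.val.testBit j.val
  | .b i, .bh z j => z = i.val.testBit j.val
  | .a i, .a i' => i ≠ i'
  | .b i, .b i' => i ≠ i'
  | .a _, .as _ => True
  | .b _, .bs _ => True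
  | _, _ => False

/-- The diameter gadget graph. -/
def gadget (h s ℓ : ℕ) : SimpleGraph (GV h s ℓ) where
  Adj u v := u ≠ v ∧ (gadgetAdj0 u v ∨ gadgetAdj0 v u)
  symm := ⟨fun u v huv => ⟨huv.1.symm, huv.2.symm⟩⟩
  loopless := ⟨fun u hu => hu.1 rfl⟩

/-- The weights of the diameter gadget: tree edges, path edges and the attachment edges of
`a^z_j, b^z_j, a*_j, b*_j` to the paths have weight `1`; leaf–path edges, `a_i`–`a^{bin(i,j)}_j`,
`b_i`–`b^{bin(i,j)}_j` edges and clique edges have weight `α`; `a_i`–`a*_j` has weight `α` if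
`x_{i,j}=1` and `β` otherwise, and similarly `b_i`–`b*_j` according to `y`. -/
def gadgetW {h s ℓ : ℕ} (x y : Fin (2 ^ s) → Fin ℓ → Bool) (α β : ℕ) :
    GV h s ℓ → GV h s ℓ → ℕ
  | .a i, .as j => if x i j then α else β
  | .as j, .a i => if x i j then α else β
  | .b i, .bs j => if y i j then α else β
  | .bs j, .b i => if y i j then α else β
  | .t _, .p _ _ => α
  | .p _ _, .t _ => α
  | .a _, .ah _ _ => α
  | .ah _ _, .a _ => α
  | .b _, .bh _ _ => α
  | .bh _ _, .b _ => α
  | .a _, .a _ => α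
  | .b _, .b _ => α
  | _, _ => 1

/-!
If every row of `x ∧ y` has a common `1`, all distances are at most `2α + 2^(h+1)`: the tree
joins any two path nodes at cost about `2α`, every `a_i` reaches the first node of every row within
`2α + 1` (through the clique and the bit nodes, or directly through an edge `a_i a*_j` of weight
at most `β ≤ 2α`), and `a_i`, `b_{i'}` are joined along a single row, found from a bit where `i` and `i'`
differ, or from a common `1` in row `i` when `i = i'`.

If row `i₀` has no common `1`, a potential equal to `0` at `a_{i₀}` and `3α` at `b_{i₀}` that
changes along each edge by at most its weight gives `d(a_{i₀}, b_{i₀}) ≥ 3α`.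

With `α = n²` and `εn ≥ 2`, `(3/2 - ε)(2n² + 2n) < 3n²` separates the two cases.
-/

section WeightedDistance

variable {V : Type*} {G : SimpleGraph V} {w : V → V → ℝ≥0∞}

@[simp]
lemma wlen_nil {u : V} : wlen G w (.nil : G.Walk u u) = 0 := rfl

@[simp]
lemma wlen_cons {u v x : V} (huv : G.Adj u v) (p : G.Walk v x) :
    wlen G w (.cons huv p) = w u v + wlen G w p := rfl

lemma wlen_append {u v x : V} (p : G.Walk u v) (q : G.Walk v x) :
    wlen G w (p.append q) = wlen G w p + wlen G w q := by
  simp [wlen, SimpleGraph.Walk.darts_append]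

lemma wlen_reverse (hw : ∀ u v, w u v = w v u) {u v : V} (p : G.Walk u v) :
    wlen G w p.reverse = wlen G w p := by
  simp [wlen, SimpleGraph.Walk.darts_reverse, List.sum_reverse, Function.comp_def, hw]

lemma wdist_le_wlen {u v : V} (p : G.Walk u v) : wdist G w u v ≤ wlen G w p := iInf_le _ p

lemma wdist_self (u : V) : wdist G w u u = 0 :=
  nonpos_iff_eq_zero.1 (wdist_le_wlen .nil)

lemma wdist_le_of_adj {u v : V} (huv : G.Adj u v) : wdist G w u v ≤ w u v := by
  simpa using wdist_le_wlen (w := w) (.cons huv .nil)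

lemma wdist_triangle (u m v : V) : wdist G w u v ≤ wdist G w u m + wdist G w m v := by
  simp only [wdist, ENNReal.iInf_add, ENNReal.add_iInf]
  exact le_iInf₂ fun q p => (wdist_le_wlen (p.append q)).trans_eq (wlen_append p q)

lemma wdist_le_via {u m v : V} {a b c : ℕ} (hum : wdist G w u m ≤ a) (hmv : wdist G w m v ≤ b)
    (habc : a + b ≤ c) : wdist G w u v ≤ c :=
  (wdist_triangle u m v).trans <| (add_le_add hum hmv).trans <| by exact_mod_cast habc

lemma wdist_comm (hw : ∀ u v, w u v = w v u) (u v : V) : wdist G w u v = wdist G w v u := by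
  suffices ∀ u v, wdist G w v u ≤ wdist G w u v from le_antisymm (this v u) (this u v)
  exact fun u v => le_iInf fun p => wlen_reverse hw p ▸ wdist_le_wlen p.reverse

lemma le_add_wdist_of_forall_adj {φ : V → ℝ≥0∞} (hφ : ∀ u v, G.Adj u v → φ v ≤ φ u + w u v)
    (u v : V) : φ v ≤ φ u + wdist G w u v := by
  simp only [wdist, ENNReal.add_iInf]
  refine le_iInf fun p => ?_
  induction p with
  | nil => simp
  | @cons u m v hum p ih =>
    calc φ v ≤ φ m + wlen G w p := ih
      _ ≤ φ u + w u m + wlen G w p := by gcongr; exact hφ u m hum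
      _ = φ u + wlen G w (.cons hum p) := by rw [wlen_cons, add_assoc]

lemma wdist_le_wdiam (u v : V) : wdist G w u v ≤ wdiam G w :=
  le_iSup₂ (f := fun u v => wdist G w u v) u v

lemma wdiam_le {c : ℝ≥0∞} (h : ∀ u v, wdist G w u v ≤ c) : wdiam G w ≤ c := iSup₂_le h

end WeightedDistance

namespace GV

variable {h s ℓ : ℕ}

def rootIdx (h : ℕ) : Fin (2 ^ (h + 1) - 1) :=
  ⟨0, by have := Nat.one_lt_two_pow_iff.2 h.succ_ne_zero; omega⟩

def leafIdx (j : Fin (2 ^ h)) : Fin (2 ^ (h + 1) - 1) := ⟨2 ^ h - 1 + j, by grind⟩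

def firstCol (h : ℕ) : Fin (2 ^ h) := ⟨0, Nat.two_pow_pos h⟩

def lastCol (h : ℕ) : Fin (2 ^ h) := ⟨2 ^ h - 1, by have := Nat.two_pow_pos h; omega⟩

/-- The row `2k + z` (0-based) joins `a^z_k` at its first column to `b^{¬z}_k` at its last. -/
def bitRow (ℓ : ℕ) (z : Bool) (k : Fin s) : Fin (2 * s + ℓ) :=
  ⟨2 * k + if z then 1 else 0, by cases z <;> grind⟩

def starRow (s : ℕ) (j : Fin ℓ) : Fin (2 * s + ℓ) := ⟨2 * s + j, by omega⟩

lemma bitRow_or_starRow (r : Fin (2 * s + ℓ)) :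
    (∃ z k, r = bitRow ℓ z k) ∨ ∃ j, r = starRow s j := by
  by_cases hr : r.val < 2 * s
  · refine .inl ⟨decide (r.val % 2 = 1), ⟨r.val / 2, by omega⟩, Fin.ext ?_⟩
    by_cases hodd : r.val % 2 = 1 <;> simp [bitRow, hodd] <;> omega
  · exact .inr ⟨⟨r.val - 2 * s, by omega⟩, Fin.ext (by simp [starRow]; omega)⟩

lemma exists_testBit_eq (k : Fin s) (z : Bool) : ∃ i : Fin (2 ^ s), i.val.testBit k = z := by
  refine ⟨⟨if z then 2 ^ k.val else 0, ?_⟩, ?_⟩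
  · split
    · exact Nat.pow_lt_pow_right (by norm_num) k.isLt
    · exact Nat.two_pow_pos s
  · cases z <;> simp

lemma exists_testBit_ne {i i' : Fin (2 ^ s)} (hii' : i ≠ i') :
    ∃ k : Fin s, i.val.testBit k ≠ i'.val.testBit k := by
  obtain ⟨k, hk⟩ := Nat.exists_testBit_ne_of_ne (Fin.val_ne_of_ne hii')
  refine ⟨⟨k, ?_⟩, hk⟩
  by_contra! hsk
  have hpow := Nat.pow_le_pow_right two_pos hsk
  rw [Nat.testBit_lt_two_pow (i.isLt.trans_le hpow),
    Nat.testBit_lt_two_pow (i'.isLt.trans_le hpow)] at hk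
  exact hk rfl

lemma ne_of_gadgetAdj0 {u v : GV h s ℓ} (huv : gadgetAdj0 u v) : u ≠ v := by
  rintro rfl
  cases u <;> simp [gadgetAdj0] at huv
  omega

end GV

open GV

section Gadget

variable {h s ℓ : ℕ} {x y : Fin (2 ^ s) → Fin ℓ → Bool} {α β : ℕ}

local notation "gd" => wdist (gadget h s ℓ) (fun u v => ((gadgetW x y α β u v : ℕ) : ℝ≥0∞))

lemma gadgetW_comm (u v : GV h s ℓ) : gadgetW x y α β u v = gadgetW x y α β v u := by
  cases u <;> cases v <;> rfl

lemma gdist_comm (u v : GV h s ℓ) : gd u v = gd v u :=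
  wdist_comm (fun u v => by rw [gadgetW_comm]) u v

lemma gdist_le_of_gadgetAdj0 {u v : GV h s ℓ} (huv : gadgetAdj0 u v) :
    gd u v ≤ gadgetW x y α β u v :=
  wdist_le_of_adj ⟨ne_of_gadgetAdj0 huv, .inl huv⟩

lemma gdist_t_rootIdx_le (m : Fin (2 ^ (h + 1) - 1)) : gd (t m) (t (rootIdx h)) ≤ h := by
  suffices ∀ (k : ℕ) (m : Fin (2 ^ (h + 1) - 1)),
      m.val + 1 < 2 ^ (k + 1) → gd (t m) (t (rootIdx h)) ≤ k from
    this h m (by have := m.isLt; omega)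
  intro k
  induction k with
  | zero =>
    intro m hm
    obtain rfl : m = rootIdx h := Fin.ext (by simp [rootIdx]; omega)
    simp [wdist_self]
  | succ k ih =>
    intro m hm
    by_cases hm0 : m.val = 0
    · obtain rfl : m = rootIdx h := Fin.ext hm0
      simp [wdist_self]
    · have hpow : 2 ^ (k + 1 + 1) = 2 * 2 ^ (k + 1) := by ring
      let parent : Fin (2 ^ (h + 1) - 1) := ⟨(m.val + 1) / 2 - 1, by omega⟩
      exact wdist_le_via (m := t parent)
        (gdist_le_of_gadgetAdj0 ⟨by omega, by simp [parent]; omega⟩)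
        (ih parent (by simp [parent]; omega)) (by simp [gadgetW]; omega)

lemma gdist_t_t (m m' : Fin (2 ^ (h + 1) - 1)) : gd (t m) (t m') ≤ (2 * h : ℕ) :=
  wdist_le_via (gdist_t_rootIdx_le m) ((gdist_comm _ _).trans_le (gdist_t_rootIdx_le m'))
    (by omega)

lemma gdist_p_p_of_row (r : Fin (2 * s + ℓ)) (j j' : Fin (2 ^ h)) :
    gd (p r j) (p r j') ≤ (2 ^ h - 1 : ℕ) := by
  suffices ∀ (d : ℕ) (j j' : Fin (2 ^ h)), j.val = j'.val + d → gd (p r j) (p r j') ≤ d by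
    rcases le_total j' j with hle | hle
    · exact (this (j - j') j j' (by omega)).trans (by norm_cast; omega)
    · rw [gdist_comm]
      exact (this (j' - j) j' j (by omega)).trans (by norm_cast; omega)
  intro d
  induction d with
  | zero =>
    intro j j' hjj'
    obtain rfl : j = j' := Fin.ext hjj'
    simp [wdist_self]
  | succ d ih =>
    intro j j' hjj'
    let prev : Fin (2 ^ h) := ⟨j.val - 1, by omega⟩
    exact wdist_le_via (m := p r prev) (gdist_le_of_gadgetAdj0 ⟨rfl, by simp [prev]; omega⟩)
      (ih prev j' (by simp [prev]; omega)) (by simp [gadgetW]; omega)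

lemma gdist_leafIdx_p (j : Fin (2 ^ h)) (r : Fin (2 * s + ℓ)) :
    gd (t (leafIdx j)) (p r j) ≤ α :=
  gdist_le_of_gadgetAdj0 (by simp [gadgetAdj0, leafIdx]; omega)

lemma gdist_p_p (r : Fin (2 * s + ℓ)) (j : Fin (2 ^ h)) (r' : Fin (2 * s + ℓ))
    (j' : Fin (2 ^ h)) : gd (p r j) (p r' j') ≤ (2 * α + (2 ^ h - 1) : ℕ) :=
  wdist_le_via (wdist_le_via ((gdist_comm _ _).trans_le (gdist_leafIdx_p j r))
    (gdist_leafIdx_p j r') le_rfl) (gdist_p_p_of_row r' j j') (by omega)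

lemma gdist_t_p (m : Fin (2 ^ (h + 1) - 1)) (r : Fin (2 * s + ℓ)) (j : Fin (2 ^ h)) :
    gd (t m) (p r j) ≤ (2 * h + α : ℕ) :=
  wdist_le_via (gdist_t_t m (leafIdx j)) (gdist_leafIdx_p j r) le_rfl

variable (x y α β) in
lemma GV.eq_t_or_eq_a_or_eq_b_or_near_p (v : GV h s ℓ) :
    (∃ m, v = t m) ∨ (∃ i, v = a i) ∨ (∃ i, v = b i) ∨ ∃ r j, gd v (p r j) ≤ (1 : ℕ) := by
  cases v with
  | t m => exact .inl ⟨m, rfl⟩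
  | a i => exact .inr <| .inl ⟨i, rfl⟩
  | b i => exact .inr <| .inr <| .inl ⟨i, rfl⟩
  | p r j => exact .inr <| .inr <| .inr ⟨r, j, by simp [wdist_self]⟩
  | ah z k =>
    exact .inr <| .inr <| .inr ⟨bitRow ℓ z k, firstCol h, gdist_le_of_gadgetAdj0 ⟨rfl, rfl⟩⟩
  | bh z k =>
    refine .inr <| .inr <| .inr ⟨bitRow ℓ (!z) k, lastCol h, gdist_le_of_gadgetAdj0 ⟨?_, rfl⟩⟩
    cases z <;> rfl
  | as j =>
    exact .inr <| .inr <| .inr ⟨starRow s j, firstCol h, gdist_le_of_gadgetAdj0 ⟨rfl, rfl⟩⟩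
  | bs j =>
    exact .inr <| .inr <| .inr ⟨starRow s j, lastCol h, gdist_le_of_gadgetAdj0 ⟨rfl, rfl⟩⟩

lemma gdist_a_a (i i' : Fin (2 ^ s)) : gd (a i) (a i') ≤ α := by
  obtain rfl | hii' := eq_or_ne i i'
  · simp [wdist_self]
  · exact gdist_le_of_gadgetAdj0 hii'

lemma gdist_b_b (i i' : Fin (2 ^ s)) : gd (b i) (b i') ≤ α := by
  obtain rfl | hii' := eq_or_ne i i'
  · simp [wdist_self]
  · exact gdist_le_of_gadgetAdj0 hii'

lemma gdist_a_bitRow {i : Fin (2 ^ s)} {k : Fin s} {z : Bool} (hik : i.val.testBit k = z) :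
    gd (a i) (p (bitRow ℓ z k) (firstCol h)) ≤ (α + 1 : ℕ) :=
  wdist_le_via (m := ah z k) (gdist_le_of_gadgetAdj0 hik.symm) (gdist_le_of_gadgetAdj0 ⟨rfl, rfl⟩)
    le_rfl

lemma gdist_b_bitRow {i : Fin (2 ^ s)} {k : Fin s} {z : Bool} (hik : i.val.testBit k = !z) :
    gd (b i) (p (bitRow ℓ z k) (lastCol h)) ≤ (α + 1 : ℕ) :=
  wdist_le_via (m := bh (!z) k) (gdist_le_of_gadgetAdj0 hik.symm)
    (gdist_le_of_gadgetAdj0 ⟨by cases z <;> rfl, rfl⟩) le_rfl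

lemma gdist_a_starRow {i : Fin (2 ^ s)} {j : Fin ℓ} (hx : x i j = true) :
    gd (a i) (p (starRow s j) (firstCol h)) ≤ (α + 1 : ℕ) :=
  wdist_le_via (m := as j)
    ((gdist_le_of_gadgetAdj0 (show gadgetAdj0 (a i) (as j) from trivial)).trans_eq
      (by simp [gadgetW, hx]))
    (gdist_le_of_gadgetAdj0 ⟨rfl, rfl⟩) le_rfl

lemma gdist_b_starRow {i : Fin (2 ^ s)} {j : Fin ℓ} (hy : y i j = true) :
    gd (b i) (p (starRow s j) (lastCol h)) ≤ (α + 1 : ℕ) :=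
  wdist_le_via (m := bs j)
    ((gdist_le_of_gadgetAdj0 (show gadgetAdj0 (b i) (bs j) from trivial)).trans_eq
      (by simp [gadgetW, hy]))
    (gdist_le_of_gadgetAdj0 ⟨rfl, rfl⟩) le_rfl

lemma gdist_a_firstCol (hβ : β ≤ 2 * α) (i : Fin (2 ^ s)) (r : Fin (2 * s + ℓ)) :
    gd (a i) (p r (firstCol h)) ≤ (2 * α + 1 : ℕ) := by
  rcases bitRow_or_starRow r with ⟨z, k, rfl⟩ | ⟨j, rfl⟩
  · obtain ⟨i', hi'⟩ := exists_testBit_eq k z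
    exact wdist_le_via (gdist_a_a i i') (gdist_a_bitRow hi') (by omega)
  · refine wdist_le_via (m := as j) (b := 1)
      ((gdist_le_of_gadgetAdj0 (show gadgetAdj0 (a i) (as j) from trivial)).trans ?_)
      (gdist_le_of_gadgetAdj0 ⟨rfl, rfl⟩) le_rfl
    norm_cast
    simp only [gadgetW]
    split <;> omega

lemma gdist_b_lastCol (hβ : β ≤ 2 * α) (i : Fin (2 ^ s)) (r : Fin (2 * s + ℓ)) :
    gd (b i) (p r (lastCol h)) ≤ (2 * α + 1 : ℕ) := by
  rcases bitRow_or_starRow r with ⟨z, k, rfl⟩ | ⟨j, rfl⟩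
  · obtain ⟨i', hi'⟩ := exists_testBit_eq k (!z)
    exact wdist_le_via (gdist_b_b i i') (gdist_b_bitRow hi') (by omega)
  · refine wdist_le_via (m := bs j) (b := 1)
      ((gdist_le_of_gadgetAdj0 (show gadgetAdj0 (b i) (bs j) from trivial)).trans ?_)
      (gdist_le_of_gadgetAdj0 ⟨rfl, rfl⟩) le_rfl
    norm_cast
    simp only [gadgetW]
    split <;> omega

lemma gdist_a_p (hβ : β ≤ 2 * α) (i : Fin (2 ^ s)) (r : Fin (2 * s + ℓ)) (j : Fin (2 ^ h)) :
    gd (a i) (p r j) ≤ (2 * α + 2 ^ h : ℕ) :=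
  wdist_le_via (gdist_a_firstCol hβ i r) (gdist_p_p_of_row r _ j)
    (by have := Nat.two_pow_pos h; omega)

lemma gdist_b_p (hβ : β ≤ 2 * α) (i : Fin (2 ^ s)) (r : Fin (2 * s + ℓ)) (j : Fin (2 ^ h)) :
    gd (b i) (p r j) ≤ (2 * α + 2 ^ h : ℕ) :=
  wdist_le_via (gdist_b_lastCol hβ i r) (gdist_p_p_of_row r _ j)
    (by have := Nat.two_pow_pos h; omega)

lemma gdist_a_t {i : Fin (2 ^ s)} {j : Fin ℓ} (hx : x i j = true) (m : Fin (2 ^ (h + 1) - 1)) :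
    gd (a i) (t m) ≤ (2 * α + 1 + 2 * h : ℕ) :=
  wdist_le_via
    (wdist_le_via (gdist_a_starRow hx) ((gdist_comm _ _).trans_le (gdist_leafIdx_p _ _)) le_rfl)
    (gdist_t_t _ m) (by omega)

lemma gdist_b_t {i : Fin (2 ^ s)} {j : Fin ℓ} (hy : y i j = true) (m : Fin (2 ^ (h + 1) - 1)) :
    gd (b i) (t m) ≤ (2 * α + 1 + 2 * h : ℕ) :=
  wdist_le_via
    (wdist_le_via (gdist_b_starRow hy) ((gdist_comm _ _).trans_le (gdist_leafIdx_p _ _)) le_rfl)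
    (gdist_t_t _ m) (by omega)

lemma gdist_a_b (hF : ∀ i, ∃ j, x i j = true ∧ y i j = true) (i i' : Fin (2 ^ s)) :
    gd (a i) (b i') ≤ (2 * α + 2 ^ h + 1 : ℕ) := by
  suffices ∃ r, gd (a i) (p r (firstCol h)) ≤ (α + 1 : ℕ) ∧
      gd (b i') (p r (lastCol h)) ≤ (α + 1 : ℕ) by
    obtain ⟨r, hi, hi'⟩ := this
    exact wdist_le_via (wdist_le_via hi (gdist_p_p_of_row r _ (lastCol h)) le_rfl)
      ((gdist_comm _ _).trans_le hi') (by have := Nat.two_pow_pos h; omega)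
  obtain rfl | hii' := eq_or_ne i i'
  · obtain ⟨j, hx, hy⟩ := hF i
    exact ⟨starRow s j, gdist_a_starRow hx, gdist_b_starRow hy⟩
  · obtain ⟨k, hk⟩ := exists_testBit_ne hii'
    exact ⟨bitRow ℓ _ k, gdist_a_bitRow rfl, gdist_b_bitRow (Bool.eq_not_iff.2 hk.symm)⟩

lemma gdist_le_two_mul_add_two_pow (hβ : β ≤ 2 * α) (hF : ∀ i, ∃ j, x i j = true ∧ y i j = true)
    (u v : GV h s ℓ) : gd u v ≤ (2 * α + 2 ^ (h + 1) : ℕ) := by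
  have := Nat.lt_two_pow_self (n := h)
  have : 2 ^ (h + 1) = 2 * 2 ^ h := by ring
  have le_D {u v : GV h s ℓ} {c : ℕ} (huv : gd u v ≤ c) (hc : c ≤ 2 * α + 2 ^ (h + 1)) :
      gd u v ≤ (2 * α + 2 ^ (h + 1) : ℕ) := huv.trans (by exact_mod_cast hc)
  have hat m i : gd (a i) (t m) ≤ (2 * α + 1 + 2 * h : ℕ) := by
    obtain ⟨j, hx, -⟩ := hF i; exact gdist_a_t hx m
  have hbt m i : gd (b i) (t m) ≤ (2 * α + 1 + 2 * h : ℕ) := by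
    obtain ⟨j, -, hy⟩ := hF i; exact gdist_b_t hy m
  rcases eq_t_or_eq_a_or_eq_b_or_near_p x y α β u with
      ⟨m, rfl⟩ | ⟨i, rfl⟩ | ⟨i, rfl⟩ | ⟨r, j, hu⟩ <;>
    rcases eq_t_or_eq_a_or_eq_b_or_near_p x y α β v with
      ⟨m', rfl⟩ | ⟨i', rfl⟩ | ⟨i', rfl⟩ | ⟨r', j', hv⟩
  · exact le_D (gdist_t_t m m') (by omega)
  · exact le_D ((gdist_comm _ _).trans_le (hat m i')) (by omega)
  · exact le_D ((gdist_comm _ _).trans_le (hbt m i')) (by omega)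
  · exact wdist_le_via (gdist_t_p m r' j') ((gdist_comm _ _).trans_le hv) (by omega)
  · exact le_D (hat m' i) (by omega)
  · exact le_D (gdist_a_a i i') (by omega)
  · exact le_D (gdist_a_b hF i i') (by omega)
  · exact wdist_le_via (gdist_a_p hβ i r' j') ((gdist_comm _ _).trans_le hv) (by omega)
  · exact le_D (hbt m' i) (by omega)
  · exact le_D ((gdist_comm _ _).trans_le (gdist_a_b hF i' i)) (by omega)
  · exact le_D (gdist_b_b i i') (by omega)
  · exact wdist_le_via (gdist_b_p hβ i r' j') ((gdist_comm _ _).trans_le hv) (by omega)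
  · exact wdist_le_via hu ((gdist_comm _ _).trans_le (gdist_t_p m' r j)) (by omega)
  · exact wdist_le_via hu ((gdist_comm _ _).trans_le (gdist_a_p hβ i' r j)) (by omega)
  · exact wdist_le_via hu ((gdist_comm _ _).trans_le (gdist_b_p hβ i' r j)) (by omega)
  · exact wdist_le_via (wdist_le_via hu (gdist_p_p r j r' j') le_rfl) ((gdist_comm _ _).trans_le hv)
      (by omega)

/-- `α` for the rows whose first node is one `α`-edge away from `a_{i₀}`, `2α` for the others. -/
def rowLevel (x : Fin (2 ^ s) → Fin ℓ → Bool) (α : ℕ) (i₀ : Fin (2 ^ s)) (r : Fin (2 * s + ℓ)) :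
    ℕ :=
  if hr : r.val < 2 * s then
    if decide (r.val % 2 = 1) = i₀.val.testBit (r.val / 2) then α else 2 * α
  else if x i₀ ⟨r.val - 2 * s, by omega⟩ then α else 2 * α

lemma rowLevel_bitRow (i₀ : Fin (2 ^ s)) (z : Bool) (k : Fin s) :
    rowLevel x α i₀ (bitRow ℓ z k) = if z = i₀.val.testBit k then α else 2 * α := by
  have hk : 2 * k.val + 1 < 2 * s := by omega
  cases z <;> simp [rowLevel, bitRow, hk, (by omega : 2 * k.val < 2 * s), Nat.mul_add_div]

def separatingPotential (x : Fin (2 ^ s) → Fin ℓ → Bool) (α : ℕ) (i₀ : Fin (2 ^ s)) :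
    GV h s ℓ → ℕ
  | .t _ => α
  | .p r _ => rowLevel x α i₀ r
  | .a i => if i = i₀ then 0 else α
  | .b i => if i = i₀ then 3 * α else 2 * α
  | .ah z k => if z = i₀.val.testBit k then α else 2 * α
  | .bh z k => if z = i₀.val.testBit k then 2 * α else α
  | .as j => if x i₀ j then α else 2 * α
  | .bs j => if x i₀ j then α else 2 * α

lemma separatingPotential_le_of_gadgetAdj0 {i₀ : Fin (2 ^ s)} (hβ : 2 * α ≤ β)
    (hi₀ : ¬∃ j, x i₀ j = true ∧ y i₀ j = true) {u v : GV h s ℓ} (huv : gadgetAdj0 u v) :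
    separatingPotential x α i₀ v ≤ separatingPotential x α i₀ u + gadgetW x y α β u v ∧
      separatingPotential x α i₀ u ≤ separatingPotential x α i₀ v + gadgetW x y α β u v := by
  rcases u with m | ⟨r, j⟩ | i | i | ⟨z, k⟩ | ⟨z, k⟩ | j | j <;>
    rcases v with m' | ⟨r', j'⟩ | i' | i' | ⟨z', k'⟩ | ⟨z', k'⟩ | j' | j' <;>
    simp only [gadgetAdj0] at huv
  case ah.p =>
    obtain rfl : r' = bitRow ℓ z k := Fin.ext huv.1
    simp only [separatingPotential, rowLevel_bitRow, gadgetW]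
    omega
  case bh.p =>
    obtain rfl : r' = bitRow ℓ (!z) k := Fin.ext (by cases z <;> simpa [bitRow] using huv.1)
    simp only [separatingPotential, rowLevel_bitRow, gadgetW]
    cases z <;> cases i₀.val.testBit k <;> simp
  all_goals
    simp only [separatingPotential, rowLevel, gadgetW]
    constructor <;> (try split_ifs) <;> first | omega | simp_all

lemma three_mul_le_gdist_a_b {i₀ : Fin (2 ^ s)} (hβ : 2 * α ≤ β)
    (hi₀ : ¬∃ j, x i₀ j = true ∧ y i₀ j = true) : ((3 * α : ℕ) : ℝ≥0∞) ≤ gd (a i₀) (b i₀) := by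
  have hφ : ∀ u v, (gadget h s ℓ).Adj u v → (separatingPotential x α i₀ v : ℝ≥0∞) ≤
      separatingPotential x α i₀ u + gadgetW x y α β u v := by
    rintro u v ⟨-, huv | hvu⟩
    · exact_mod_cast (separatingPotential_le_of_gadgetAdj0 hβ hi₀ huv).1
    · rw [gadgetW_comm]
      exact_mod_cast (separatingPotential_le_of_gadgetAdj0 hβ hi₀ hvu).2
  simpa [separatingPotential] using le_add_wdist_of_forall_adj hφ (a i₀) (b i₀)

end Gadget

lemma two_pow_succ_sub_one_le_card (h s ℓ : ℕ) : 2 ^ (h + 1) - 1 ≤ Fintype.card (GV h s ℓ) := by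
  simpa using Fintype.card_le_of_injective _ fun _ _ => GV.t.inj

lemma ofReal_three_halves_sub_mul_lt {ε : ℝ} {n : ℕ} (hε : 0 < ε) (hn : 2 / ε ≤ n) :
    ENNReal.ofReal (3 / 2 - ε) * ((2 * n ^ 2 + 2 * n : ℕ) : ℝ≥0∞) < ((3 * n ^ 2 : ℕ) : ℝ≥0∞) := by
  have hεn : 2 ≤ ε * n := by rwa [div_le_iff₀ hε, mul_comm] at hn
  have hn0 : 0 < n := by exact_mod_cast (show (0 : ℝ) < n by nlinarith)
  rw [← ENNReal.ofReal_natCast, ← ENNReal.ofReal_natCast, ← ENNReal.ofReal_mul' (by positivity),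
    ENNReal.ofReal_lt_ofReal_iff (Nat.cast_pos.2 (by positivity))]
  push_cast
  nlinarith

theorem stmt13_general (h s ℓ : ℕ)
    (n : ℕ) (hn : n = Fintype.card (GV h s ℓ))
    (α β : ℕ) (hα : α = n ^ 2) (hβ : β = 2 * n ^ 2)
    (x y : Fin (2 ^ s) → Fin ℓ → Bool)
    (ε : ℝ) (hε0 : 0 < ε) (hnε : 2 / ε ≤ (n : ℝ))
    (Dt : ℝ≥0∞)
    (hDt1 : wdiam (gadget h s ℓ) (fun u v => ((gadgetW x y α β u v : ℕ) : ℝ≥0∞)) ≤ Dt)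
    (hDt2 : Dt ≤ ENNReal.ofReal (3 / 2 - ε) *
      wdiam (gadget h s ℓ) (fun u v => ((gadgetW x y α β u v : ℕ) : ℝ≥0∞))) :
    ((∀ i : Fin (2 ^ s), ∃ j : Fin ℓ, x i j = true ∧ y i j = true) →
      Dt < ((3 * n ^ 2 : ℕ) : ℝ≥0∞)) ∧
    ((¬ ∀ i : Fin (2 ^ s), ∃ j : Fin ℓ, x i j = true ∧ y i j = true) →
      ((3 * n ^ 2 : ℕ) : ℝ≥0∞) ≤ Dt) := by
  subst hα hβ
  refine ⟨fun hF => ?_, fun hF => ?_⟩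
  · have hcard := two_pow_succ_sub_one_le_card h s ℓ
    have hpow := Nat.one_lt_two_pow_iff.2 h.succ_ne_zero
    have hdiam := wdiam_le fun u v => (gdist_le_two_mul_add_two_pow le_rfl hF u v).trans
      (Nat.cast_le.2 (show 2 * n ^ 2 + 2 ^ (h + 1) ≤ 2 * n ^ 2 + 2 * n by omega))
    exact hDt2.trans_lt <|
      (mul_le_mul_right hdiam _).trans_lt (ofReal_three_halves_sub_mul_lt hε0 hnε)
  · obtain ⟨i₀, hi₀⟩ := not_forall.1 hF
    exact (three_mul_le_gdist_a_b le_rfl hi₀).trans ((wdist_le_wdiam _ _).trans hDt1)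

/-- For the diameter gadget `(G,w)` with `α = n²`, `β = 2n²`
(`n = |V|`), and any real `ε ∈ (0,1/2]` with `n ≥ 2/ε`: every `D̃` with
`D_{G,w} ≤ D̃ ≤ (3/2−ε)·D_{G,w}` satisfies `D̃ < 3n²` if `F(x,y)=1` and `D̃ ≥ 3n²` if
`F(x,y)=0`; in particular such a `D̃` determines the value of `F(x,y)`. -/
theorem stmt13 (h s ℓ : ℕ) (hh : 1 ≤ h) (hs : 1 ≤ s) (hℓ : 1 ≤ ℓ)
    (n : ℕ) (hn : n = Fintype.card (GV h s ℓ))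
    (α β : ℕ) (hα : α = n ^ 2) (hβ : β = 2 * n ^ 2)
    (x y : Fin (2 ^ s) → Fin ℓ → Bool)
    (ε : ℝ) (hε0 : 0 < ε) (hε1 : ε ≤ 1 / 2) (hnε : 2 / ε ≤ (n : ℝ))
    (Dt : ℝ≥0∞)
    (hDt1 : wdiam (gadget h s ℓ) (fun u v => ((gadgetW x y α β u v : ℕ) : ℝ≥0∞)) ≤ Dt)
    (hDt2 : Dt ≤ ENNReal.ofReal (3 / 2 - ε) *
      wdiam (gadget h s ℓ) (fun u v => ((gadgetW x y α β u v : ℕ) : ℝ≥0∞))) :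
    ((∀ i : Fin (2 ^ s), ∃ j : Fin ℓ, x i j = true ∧ y i j = true) →
      Dt < ((3 * n ^ 2 : ℕ) : ℝ≥0∞)) ∧
    ((¬ ∀ i : Fin (2 ^ s), ∃ j : Fin ℓ, x i j = true ∧ y i j = true) →
      ((3 * n ^ 2 : ℕ) : ℝ≥0∞) ≤ Dt) :=
  stmt13_general h s ℓ n hn α β hα hβ x y ε hε0 hnε Dt hDt1 hDt2
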